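/- arXiv:2405.06337 — 2 statements merged into one kernel-verified Lean document; each statement's English description precedes it below -/
import Mathlib

section
/- Let X be a reflexive Banach space, Y a Hilbert space, A : X → Y bounded linear, R : X → ℝ convex and Fréchet differentiable. Suppose f† ∈ X satisfies the source condition ∇R(f†) = A* w† for some w† ∈ Y, and let g^δ = A f† + δε with ‖ε‖_Y ≤ 1, δ > 0. If f_α minimizes f ↦ (1/2)‖A f − g^δ‖²_Y + α R(f), then (1/2)‖A(f_α − f†)‖²_Y + α D_R(f_α, f†) ≤ 2α²‖w†‖²_Y + δ²‖ε‖²_Y, where D_R(u,v) = ⟨∇R(u) − ∇R(v), u − v⟩ is the symmetric Bregman distance. -/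
/-!
Testing the optimality condition `A*(A f_α − g^δ) + α ∇R(f_α) = 0` against `f_α − f†` and
inserting the source condition gives, with `e = A (f_α − f†)`,
`α D_R(f_α, f†) = ⟪δ ε − α w†, e⟫ − ‖e‖²`.
Young's inequality absorbs half of `‖e‖²`, and the parallelogram law bounds
`½‖δ ε − α w†‖²` by `δ²‖ε‖² + α²‖w†‖²`.
-/

open scoped RealInnerProductSpace

section Tikhonov

variable {X Y : Type*} [NormedAddCommGroup X] [NormedSpace ℝ X]
  [NormedAddCommGroup Y] [InnerProductSpace ℝ Y]

theorem tikhonov_inner_add_smul_fderiv_eq_zero (A : X →L[ℝ] Y) {R : X → ℝ} {r : X →L[ℝ] ℝ}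
    {g : Y} {α : ℝ} {f₀ : X} (hR : HasFDerivAt R r f₀)
    (hmin : IsLocalMin (fun f => (1 / 2) * ‖A f - g‖ ^ 2 + α * R f) f₀) (x : X) :
    ⟪A f₀ - g, A x⟫ + α * r x = 0 := by
  have hF : HasFDerivAt (fun f => (1 / 2) * ‖A f - g‖ ^ 2 + α * R f)
      ((1 / 2 : ℝ) • (2 • (innerSL ℝ (A f₀ - g)).comp A) + α • r) f₀ :=
    ((A.hasFDerivAt.sub_const g).norm_sq.const_mul (1 / 2)).add (hR.const_mul α)
  have h := congrArg (fun L : X →L[ℝ] ℝ => L x) (hmin.hasFDerivAt_eq_zero hF)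
  simp only [add_apply, smul_apply, ContinuousLinearMap.comp_apply, innerSL_apply_apply,
    two_smul, smul_eq_mul, zero_apply] at h
  linarith

end Tikhonov

section RealInnerProductSpace

variable {Y : Type*} [NormedAddCommGroup Y] [InnerProductSpace ℝ Y]

theorem real_inner_le_half_norm_sq_add_half_norm_sq (v e : Y) :
    ⟪v, e⟫ ≤ (1 / 2) * ‖v‖ ^ 2 + (1 / 2) * ‖e‖ ^ 2 := by
  nlinarith [real_inner_le_norm v e, two_mul_le_add_sq ‖v‖ ‖e‖]

theorem norm_sub_sq_le_two_mul_add_two_mul (a b : Y) :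
    ‖a - b‖ ^ 2 ≤ 2 * ‖a‖ ^ 2 + 2 * ‖b‖ ^ 2 := by
  have h := parallelogram_law_with_norm ℝ a b
  nlinarith [sq_nonneg ‖a + b‖]

end RealInnerProductSpace

theorem stmt7_general {X Y : Type*} [NormedAddCommGroup X] [NormedSpace ℝ X]
    [NormedAddCommGroup Y] [InnerProductSpace ℝ Y]
    (A : X →L[ℝ] Y) (R : X → ℝ) (R' : X → X →L[ℝ] ℝ)
    (hdiff : ∀ f, HasFDerivAt R (R' f) f)
    (fdag : X) (wdag : Y) (hsource : ∀ x : X, R' fdag x = (inner ℝ wdag (A x) : ℝ))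
    (ε : Y) (δ α : ℝ)
    (gδ : Y) (hg : gδ = A fdag + δ • ε)
    (fα : X)
    (hmin : ∀ f : X, (1 / 2) * ‖A fα - gδ‖ ^ 2 + α * R fα
      ≤ (1 / 2) * ‖A f - gδ‖ ^ 2 + α * R f) :
    (1 / 2) * ‖A (fα - fdag)‖ ^ 2 + α * ((R' fα - R' fdag) (fα - fdag))
      ≤ 2 * α ^ 2 * ‖wdag‖ ^ 2 + δ ^ 2 * ‖ε‖ ^ 2 := by
  have hopt := tikhonov_inner_add_smul_fderiv_eq_zero A (hdiff fα)
    (Filter.Eventually.of_forall hmin) (fα - fdag)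
  set e := A (fα - fdag)
  set v := δ • ε - α • wdag
  have hresidual : A fα - gδ = e - δ • ε := by
    rw [hg, show e = A fα - A fdag from map_sub A _ _]
    abel
  have hbregman : α * ((R' fα - R' fdag) (fα - fdag)) = ⟪v, e⟫ - ‖e‖ ^ 2 := by
    rw [hresidual, inner_sub_left, real_inner_self_eq_norm_sq, real_inner_smul_left] at hopt
    rw [sub_apply, hsource, inner_sub_left, real_inner_smul_left, real_inner_smul_left]
    linarith
  calc (1 / 2) * ‖e‖ ^ 2 + α * ((R' fα - R' fdag) (fα - fdag))
      = (1 / 2) * ‖e‖ ^ 2 + (⟪v, e⟫ - ‖e‖ ^ 2) := by rw [hbregman]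
    _ ≤ (1 / 2) * ‖v‖ ^ 2 := by linarith [real_inner_le_half_norm_sq_add_half_norm_sq v e]
    _ ≤ δ ^ 2 * ‖ε‖ ^ 2 + α ^ 2 * ‖wdag‖ ^ 2 := by
      have h := norm_sub_sq_le_two_mul_add_two_mul (δ • ε) (α • wdag)
      rw [norm_smul, norm_smul, mul_pow, mul_pow, Real.norm_eq_abs, Real.norm_eq_abs,
        sq_abs, sq_abs] at h
      linarith
    _ ≤ 2 * α ^ 2 * ‖wdag‖ ^ 2 + δ ^ 2 * ‖ε‖ ^ 2 := by nlinarith [sq_nonneg (α * ‖wdag‖)]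

/-- Deterministic error estimate under the source condition: if `∇R(f†) = A* w†`,
`g^δ = A f† + δ ε` with `‖ε‖ ≤ 1`, and `f_α` minimizes
`f ↦ (1/2)‖A f − g^δ‖² + α R(f)`, then
`(1/2)‖A(f_α − f†)‖² + α D_R(f_α, f†) ≤ 2α²‖w†‖² + δ²‖ε‖²`, where
`D_R(u,v) = ⟨∇R(u) − ∇R(v), u − v⟩` is the symmetric Bregman distance. -/
theorem stmt7 {X Y : Type*} [NormedAddCommGroup X] [NormedSpace ℝ X]
    [NormedAddCommGroup Y] [InnerProductSpace ℝ Y] [CompleteSpace Y]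
    (hrefl : Function.Bijective (NormedSpace.inclusionInDoubleDual ℝ X))
    (A : X →L[ℝ] Y) (R : X → ℝ) (R' : X → X →L[ℝ] ℝ)
    (hconv : ConvexOn ℝ Set.univ R) (hdiff : ∀ f, HasFDerivAt R (R' f) f)
    (fdag : X) (wdag : Y) (hsource : ∀ x : X, R' fdag x = (inner ℝ wdag (A x) : ℝ))
    (ε : Y) (hε : ‖ε‖ ≤ 1) (δ α : ℝ) (hδ : 0 < δ) (hα : 0 < α)
    (gδ : Y) (hg : gδ = A fdag + δ • ε)
    (fα : X)
    (hmin : ∀ f : X, (1 / 2) * ‖A fα - gδ‖ ^ 2 + α * R fα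
      ≤ (1 / 2) * ‖A f - gδ‖ ^ 2 + α * R f) :
    (1 / 2) * ‖A (fα - fdag)‖ ^ 2 + α * ((R' fα - R' fdag) (fα - fdag))
      ≤ 2 * α ^ 2 * ‖wdag‖ ^ 2 + δ ^ 2 * ‖ε‖ ^ 2 :=
  stmt7_general A R R' hdiff fdag wdag hsource ε δ α gδ hg fα hmin
end

section
/- Under the hypotheses of the deterministic error estimate (source condition ∇R(f†) = A*w†, noise ‖ε‖_Y ≤ 1), the symmetric Bregman distance satisfies D_R(f_α^δ, f†) ≤ 2α‖w†‖²_Y + 2δ²/α for every α > 0; choosing α = δ/‖w†‖_Y yields D_R(f_α^δ, f†) ≤ 2‖w†‖_Y · δ, i.e., a linear convergence rate in δ. -/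
/-!
Write `r = A f_α^δ - g^δ`. Testing the optimality condition `A*r + α ∇R(f_α^δ) = 0` against
`f_α^δ - f†`, and using `∇R(f†) = A*w†` and `A (f_α^δ - f†) = r + δε`, gives the identity
`α D_R(f_α^δ, f†) = -⟪r + α w†, r + δε⟫`. Since `-⟪a, b⟫ ≤ ‖a - b‖² / 4`, the right-hand side is at
most `‖α w† - δε‖² / 4 ≤ (α²‖w†‖² + δ²) / 2`, independently of the unknown residual `r`.
-/

open scoped RealInnerProductSpace

lemma neg_real_inner_le_norm_sub_sq_div_four {E : Type*} [NormedAddCommGroup E]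
    [InnerProductSpace ℝ E] (a b : E) : -⟪a, b⟫ ≤ ‖a - b‖ ^ 2 / 4 := by
  nlinarith [norm_sub_sq_real a b, norm_add_sq_real a b, sq_nonneg ‖a + b‖]

section Tikhonov

variable {X Y : Type*} [NormedAddCommGroup X] [NormedSpace ℝ X]
  [NormedAddCommGroup Y] [InnerProductSpace ℝ Y]

noncomputable def tikhonov (A : X →L[ℝ] Y) (g : Y) (α : ℝ) (R : X → ℝ) (f : X) : ℝ :=
  (1 / 2) * ‖A f - g‖ ^ 2 + α * R f

def symmBregman (R' : X → X →L[ℝ] ℝ) (u v : X) : ℝ :=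
  (R' u - R' v) (u - v)

lemma hasFDerivAt_tikhonov {A : X →L[ℝ] Y} {g : Y} {α : ℝ} {R : X → ℝ} {R'u : X →L[ℝ] ℝ}
    {u : X} (hR : HasFDerivAt R R'u u) :
    HasFDerivAt (tikhonov A g α R) ((innerSL ℝ (A u - g)).comp A + α • R'u) u := by
  have hres : HasFDerivAt (fun f => A f - g) A u := A.hasFDerivAt.sub_const g
  have h := (hres.norm_sq.const_mul (1 / 2)).add (hR.const_mul α)
  have hderiv : (1 / 2 : ℝ) • (2 • (innerSL ℝ (A u - g)).comp A) + α • R'u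
      = (innerSL ℝ (A u - g)).comp A + α • R'u := by
    rw [← Nat.cast_smul_eq_nsmul ℝ, smul_smul]; norm_num
  rwa [hderiv] at h

lemma tikhonov_optimality {A : X →L[ℝ] Y} {g : Y} {α : ℝ} {R : X → ℝ} {R'u : X →L[ℝ] ℝ}
    {u : X} (hR : HasFDerivAt R R'u u) (hu : ∀ f, tikhonov A g α R u ≤ tikhonov A g α R f)
    (x : X) : ⟪A u - g, A x⟫ + α * R'u x = 0 := by
  have hmin : IsLocalMin (tikhonov A g α R) u := Filter.Eventually.of_forall hu
  have hzero := hmin.hasFDerivAt_eq_zero (hasFDerivAt_tikhonov hR)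
  simpa only [add_apply, smul_apply, ContinuousLinearMap.comp_apply, innerSL_apply_apply,
    smul_eq_mul, zero_apply] using DFunLike.congr_fun hzero x

lemma mul_symmBregman_eq_neg_inner {A : X →L[ℝ] Y} {g w : Y} {α : ℝ} {R' : X → X →L[ℝ] ℝ}
    {u fdag : X} (hopt : ∀ x, ⟪A u - g, A x⟫ + α * R' u x = 0)
    (hsource : ∀ x, R' fdag x = ⟪w, A x⟫) :
    α * symmBregman R' u fdag = -⟪A u - g + α • w, A u - g + (g - A fdag)⟫ := by
  have hAdiff : A (u - fdag) = A u - g + (g - A fdag) := by rw [map_sub]; abel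
  have hopt' := hopt (u - fdag)
  rw [hAdiff] at hopt'
  rw [symmBregman, sub_apply, hsource, hAdiff, inner_add_left,
    real_inner_smul_left]
  linarith

lemma symmBregman_le {A : X →L[ℝ] Y} {g w : Y} {α δ : ℝ} {R' : X → X →L[ℝ] ℝ} {u fdag : X}
    (hα : 0 < α) (hnoise : ‖g - A fdag‖ ≤ δ)
    (hopt : ∀ x, ⟪A u - g, A x⟫ + α * R' u x = 0)
    (hsource : ∀ x, R' fdag x = ⟪w, A x⟫) :
    symmBregman R' u fdag ≤ (α * ‖w‖ ^ 2 + δ ^ 2 / α) / 2 := by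
  have hdiff : A u - g + α • w - (A u - g + (g - A fdag)) = α • w - (g - A fdag) := by abel
  have hnorm : ‖α • w - (g - A fdag)‖ ≤ α * ‖w‖ + δ := by
    calc ‖α • w - (g - A fdag)‖ ≤ ‖α • w‖ + ‖g - A fdag‖ := norm_sub_le _ _
      _ ≤ α * ‖w‖ + δ := by rw [norm_smul, Real.norm_of_nonneg hα.le]; linarith
  have hmul : α * symmBregman R' u fdag ≤ (α * ‖w‖ + δ) ^ 2 / 4 := by
    rw [mul_symmBregman_eq_neg_inner hopt hsource]
    calc _ ≤ ‖α • w - (g - A fdag)‖ ^ 2 / 4 := by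
          rw [← hdiff]; exact neg_real_inner_le_norm_sub_sq_div_four _ _
      _ ≤ (α * ‖w‖ + δ) ^ 2 / 4 := by gcongr
  have hrhs : (α * ‖w‖ ^ 2 + δ ^ 2 / α) / 2 = (α ^ 2 * ‖w‖ ^ 2 + δ ^ 2) / (2 * α) := by
    field_simp
  rw [hrhs, le_div_iff₀ (by positivity)]
  nlinarith [sq_nonneg (α * ‖w‖ - δ)]

end Tikhonov

theorem stmt8_general {X Y : Type*} [NormedAddCommGroup X] [NormedSpace ℝ X]
    [NormedAddCommGroup Y] [InnerProductSpace ℝ Y]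
    (A : X →L[ℝ] Y) (R : X → ℝ) (R' : X → X →L[ℝ] ℝ)
    (hdiff : ∀ f, HasFDerivAt R (R' f) f)
    (fdag : X) (wdag : Y) (hw : wdag ≠ 0)
    (hsource : ∀ x : X, R' fdag x = (inner ℝ wdag (A x) : ℝ))
    (ε : Y) (hε : ‖ε‖ ≤ 1) (δ : ℝ) (hδ : 0 < δ)
    (gδ : Y) (hg : gδ = A fdag + δ • ε)
    (F : ℝ → X)
    (hmin : ∀ α : ℝ, 0 < α → ∀ f : X,
      (1 / 2) * ‖A (F α) - gδ‖ ^ 2 + α * R (F α) ≤ (1 / 2) * ‖A f - gδ‖ ^ 2 + α * R f) :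
    (∀ α : ℝ, 0 < α →
      (R' (F α) - R' fdag) (F α - fdag) ≤ 2 * α * ‖wdag‖ ^ 2 + 2 * δ ^ 2 / α)
    ∧ (R' (F (δ / ‖wdag‖)) - R' fdag) (F (δ / ‖wdag‖) - fdag) ≤ 2 * ‖wdag‖ * δ := by
  have hnoise : ‖gδ - A fdag‖ ≤ δ := by
    rw [hg, add_sub_cancel_left, norm_smul, Real.norm_of_nonneg hδ.le]
    exact mul_le_of_le_one_right hδ.le hε
  have key : ∀ α, 0 < α → symmBregman R' (F α) fdag ≤ (α * ‖wdag‖ ^ 2 + δ ^ 2 / α) / 2 :=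
    fun α hα => symmBregman_le hα hnoise
      (tikhonov_optimality (hdiff (F α)) (hmin α hα)) hsource
  have hwpos : 0 < ‖wdag‖ := norm_pos_iff.mpr hw
  refine ⟨fun α hα => ?_, ?_⟩
  · have : 0 ≤ α * ‖wdag‖ ^ 2 := by positivity
    have : 0 ≤ δ ^ 2 / α := by positivity
    exact (key α hα).trans (by rw [mul_assoc, mul_div_assoc]; linarith)
  · have h := key _ (div_pos hδ hwpos)
    have hfit : δ / ‖wdag‖ * ‖wdag‖ ^ 2 = ‖wdag‖ * δ := by field_simp
    have hnoise_term : δ ^ 2 / (δ / ‖wdag‖) = ‖wdag‖ * δ := by field_simp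
    rw [hfit, hnoise_term] at h
    exact h.trans (by linarith [mul_pos hwpos hδ])

/-- Under the source condition `∇R(f†) = A* w†` and noise `‖ε‖ ≤ 1`, the symmetric
Bregman distance of the minimizers satisfies `D_R(f_α^δ, f†) ≤ 2α‖w†‖² + 2δ²/α` for
every `α > 0`; the choice `α = δ/‖w†‖` yields `D_R(f_α^δ, f†) ≤ 2‖w†‖ δ`. -/
theorem stmt8 {X Y : Type*} [NormedAddCommGroup X] [NormedSpace ℝ X]
    [NormedAddCommGroup Y] [InnerProductSpace ℝ Y] [CompleteSpace Y]
    (hrefl : Function.Bijective (NormedSpace.inclusionInDoubleDual ℝ X))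
    (A : X →L[ℝ] Y) (R : X → ℝ) (R' : X → X →L[ℝ] ℝ)
    (hconv : ConvexOn ℝ Set.univ R) (hdiff : ∀ f, HasFDerivAt R (R' f) f)
    (fdag : X) (wdag : Y) (hw : wdag ≠ 0)
    (hsource : ∀ x : X, R' fdag x = (inner ℝ wdag (A x) : ℝ))
    (ε : Y) (hε : ‖ε‖ ≤ 1) (δ : ℝ) (hδ : 0 < δ)
    (gδ : Y) (hg : gδ = A fdag + δ • ε)
    (F : ℝ → X)
    (hmin : ∀ α : ℝ, 0 < α → ∀ f : X,
      (1 / 2) * ‖A (F α) - gδ‖ ^ 2 + α * R (F α) ≤ (1 / 2) * ‖A f - gδ‖ ^ 2 + α * R f) :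
    (∀ α : ℝ, 0 < α →
      (R' (F α) - R' fdag) (F α - fdag) ≤ 2 * α * ‖wdag‖ ^ 2 + 2 * δ ^ 2 / α)
    ∧ (R' (F (δ / ‖wdag‖)) - R' fdag) (F (δ / ‖wdag‖) - fdag) ≤ 2 * ‖wdag‖ * δ :=
  stmt8_general A R R' hdiff fdag wdag hw hsource ε hε δ hδ gδ hg F hmin
end
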